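/- Let M be a rooted trivalent map with boundary of degree k and n ≥ 1 trivalent vertices, and let w be the trivalent vertex incident to the root edge. Then exactly one of the following holds: (a) deleting w (together with the root) disconnects the map, and the two resulting components, each re-rooted at the dart vacated by w, are rooted trivalent maps with boundary of degrees k₁ and k₂ with k₁ + k₂ = k and with n₁ and n₂ trivalent vertices with n₁ + n₂ = n − 1; or (b) deleting w leaves the map connected, and the result, re-rooted at one vacated dart with the other vacated dart appended to the boundary, is a rooted trivalent map with boundary of degree k + 1 and n − 1 trivalent vertices. -/

import Mathlib

/-! ## Combinatorial maps -/

/-- the data of a candidate rooted trivalent map with boundary: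
a set of darts with functions `v`, `e`, a root dart and a boundary list -/
structure PreMap : Type 1 where
  carrier : Type
  v : carrier → carrier
  e : carrier → carrier
  root : carrier
  boundary : List carrier

/-- `M` is a rooted trivalent map with boundary: `v` and `e` generate a
transitive action of `Γ₃ = ⟨v, e ∣ v³ = e² = 1⟩`, the fixed points of `v` are
exactly the root and the fixed points of `e` are exactly the boundary. -/
structure IsRTMapB (M : PreMap) : Prop where
  v_cube : ∀ x, M.v (M.v (M.v x)) = x
  e_sq : ∀ x, M.e (M.e x) = x
  trans : ∀ x y, Relation.EqvGen (fun a b => M.v a = b ∨ M.e a = b) x y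
  v_fix : ∀ x, M.v x = x ↔ x = M.root
  e_fix : ∀ x, M.e x = x ↔ x ∈ M.boundary
  nodup : M.boundary.Nodup

/-- isomorphism of rooted maps with boundary -/
def MapIso (M M' : PreMap) : Prop :=
  ∃ h : M.carrier ≃ M'.carrier,
    (∀ x, h (M.v x) = M'.v (h x)) ∧ (∀ x, h (M.e x) = M'.e (h x)) ∧
    h M.root = M'.root ∧ M.boundary.map h = M'.boundary


/-- the darts deleted along with the trivalent vertex `w` incident to the
root: the root dart itself and the three darts of `w` -/
def delSet (M : PreMap) : Set M.carrier :=
  {M.root, M.e M.root, M.v (M.e M.root), M.v (M.v (M.e M.root))}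

/-- connectivity of the remaining darts after deleting `w` and the root -/
def DConn (M : PreMap) : M.carrier → M.carrier → Prop :=
  Relation.EqvGen (fun a b => a ∉ delSet M ∧ b ∉ delSet M ∧ (M.v a = b ∨ M.e a = b))

/-- the dart vacated by the first non-root port of `w` -/
def dartA (M : PreMap) : M.carrier := M.e (M.v (M.e M.root))

/-- the dart vacated by the second non-root port of `w` -/
def dartB (M : PreMap) : M.carrier := M.e (M.v (M.v (M.e M.root)))

/-- deleting `w` (together with the root) leaves the map connected: the two
vacated darts lie on a single edge (a loop at `w`), or they are joined by a
path avoiding the deleted darts -/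
def ConnCase (M : PreMap) : Prop :=
  dartA M = M.v (M.v (M.e M.root)) ∨ DConn M (dartA M) (dartB M)

attribute [local instance] Classical.propDecidable

def inComp (M : PreMap) (a x : M.carrier) : Prop := x ∉ delSet M ∧ DConn M a x

/-- the component of the vacated dart `a` after deleting `w` and the root,
re-rooted at a fresh univalent vertex (the dart `none`) glued onto `a` -/
noncomputable def compMap (M : PreMap) (a : M.carrier) : PreMap where
  carrier := Option {x : M.carrier // inComp M a x}
  v := fun d => match d with
    | none => none
    | some x => if h : inComp M a (M.v x.val) then some ⟨M.v x.val, h⟩ else none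
  e := fun d => match d with
    | none => if h : inComp M a a then some ⟨a, h⟩ else none
    | some x => if h : inComp M a (M.e x.val) then some ⟨M.e x.val, h⟩ else none
  root := none
  boundary :=
    if a ∈ delSet M then [none]
    else M.boundary.filterMap (fun x =>
      if h : inComp M a x then some (some ⟨x, h⟩) else none)

def inComp2 (M : PreMap) (x : M.carrier) : Prop :=
  x ∉ delSet M ∧ (DConn M (dartA M) x ∨ DConn M (dartB M) x)

/-- the map left after deleting `w` and the root in the connected case,
re-rooted at a fresh univalent vertex glued onto the vacated dart `dartA`,
with the other vacated dart `dartB` appended to the boundary -/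
noncomputable def connMap (M : PreMap) : PreMap where
  carrier := Option {x : M.carrier // inComp2 M x}
  v := fun d => match d with
    | none => none
    | some x => if h : inComp2 M (M.v x.val) then some ⟨M.v x.val, h⟩ else none
  e := fun d => match d with
    | none => if h : inComp2 M (dartA M) then some ⟨dartA M, h⟩ else none
    | some x =>
        if x.val = dartB M then some x
        else if h : inComp2 M (M.e x.val) then some ⟨M.e x.val, h⟩ else none
  root := none
  boundary :=
    (M.boundary.filterMap (fun x =>
      if h : inComp2 M x then some (some ⟨x, h⟩) else none)) ++
    [if h : inComp2 M (dartB M) then some ⟨dartB M, h⟩ else none]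

/-!
Every dart surviving the deletion of `w` and the root is joined, avoiding the deleted darts, to
one of the two vacated darts `dartA M`, `dartB M`: the darts that are deleted or so joined form
a set closed under `v` and `e`, hence everything by transitivity. If the vacated darts are
joined (or form a loop at `w`) the survivors make up one map; otherwise they split into the
two components. A vacated dart that was itself deleted is a boundary dart of `w`, and its
component is the one-dart map. The counts follow because exactly four darts are deleted, `v`
permutes the darts of each component in free 3-cycles, and the boundary darts of `M` are
partitioned according to the vacated dart they are joined to.
-/

theorem three_dvd_card_of_cube_eq_id {α : Type*} [Finite α] (f : α → α)
    (hf : ∀ x, f (f (f x)) = x) (hfix : ∀ x, f x ≠ x) : 3 ∣ Nat.card α := by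
  classical
  have := Fintype.ofFinite α
  let σ : Function.End α := f
  have h3 : σ ^ 3 ^ 1 = 1 := funext hf
  have hmod := Equiv.Perm.card_fixedPoints_modEq (hp := ⟨Nat.prime_three⟩) h3
  have : IsEmpty (Function.fixedPoints σ) := ⟨fun x => hfix x.1 x.2⟩
  rw [Fintype.card_eq_zero (α := Function.fixedPoints σ)] at hmod
  rw [Nat.card_eq_fintype_card]
  exact Nat.modEq_zero_iff_dvd.1 hmod

theorem Relation.EqvGen.subtype_map {α β : Type*} {r : α → α → Prop}
    {r' : β → β → Prop} {S : α → Prop} (hS : ∀ {x y}, EqvGen r x y → S x → S y)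
    (f : Subtype S → β) (hf : ∀ x y : Subtype S, r x y → r' (f x) (f y)) {x y : α}
    (h : EqvGen r x y) (hx : S x) (hy : S y) : EqvGen r' (f ⟨x, hx⟩) (f ⟨y, hy⟩) := by
  induction h with
  | rel a b hab => exact .rel _ _ (hf ⟨a, hx⟩ ⟨b, hy⟩ hab)
  | refl => exact .refl _
  | symm a b _ ih => exact .symm _ _ (ih hy hx)
  | trans a b c hab _ ih₁ ih₂ =>
    exact .trans _ _ _ (ih₁ hx (hS hab hx)) (ih₂ (hS hab hx) hy)

theorem dite_some_subtype_eq_some_iff {α : Type*} {S : α → Prop} [DecidablePred S]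
    {x : Subtype S} {y : α} :
    (if h : S y then some (⟨y, h⟩ : Subtype S) else none) = some x ↔ y = x.1 := by
  rw [Option.dite_none_right_eq_some]
  exact ⟨fun ⟨_, h⟩ => congrArg Subtype.val (Option.some_injective _ h),
    fun h => ⟨h ▸ x.2, by simp [h]⟩⟩

namespace List

variable {α : Type*} (S : α → Prop) [DecidablePred S] {l : List α}

def optRestrict (l : List α) : List (Option (Subtype S)) :=
  l.filterMap fun x => if h : S x then some (some ⟨x, h⟩) else none

theorem none_notMem_optRestrict : none ∉ l.optRestrict S := by
  simp [optRestrict]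

theorem some_mem_optRestrict {y : Subtype S} : some y ∈ l.optRestrict S ↔ y.1 ∈ l := by
  simp [optRestrict]

theorem length_optRestrict : (l.optRestrict S).length = l.countP fun x => decide (S x) := by
  rw [optRestrict, length_filterMap_eq_countP]
  refine countP_congr fun x _ => ?_
  by_cases h : S x <;> simp [h]

theorem optRestrict_eq_nil (h : ∀ x, ¬ S x) : l.optRestrict S = [] := by
  simp [optRestrict, h]

theorem Nodup.optRestrict (hl : l.Nodup) : (l.optRestrict S).Nodup := by
  refine hl.filterMap fun x x' y hx hx' => ?_
  by_cases h : S x <;> by_cases h' : S x' <;> simp only [h, h', dite_true, dite_false,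
    Option.mem_def, reduceCtorEq, Option.some.injEq] at hx hx'
  simpa using hx.trans hx'.symm

end List

theorem isRTMapB_of_forall_eq_root {M : PreMap} (h : ∀ x, x = M.root)
    (hb : M.boundary = [M.root]) : IsRTMapB M where
  v_cube x := (h _).trans (h x).symm
  e_sq x := (h _).trans (h x).symm
  trans x y := by rw [h x, h y]; exact .refl _
  v_fix x := ⟨fun _ => h x, fun _ => (h _).trans (h x).symm⟩
  e_fix x := by simp only [hb, List.mem_singleton, h x, iff_true]; exact h _
  nodup := hb ▸ List.nodup_singleton _

theorem root_mem_delSet {M : PreMap} : M.root ∈ delSet M := .inl rfl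

namespace IsRTMapB

variable {M : PreMap} (hM : IsRTMapB M)
include hM

theorem v_root : M.v M.root = M.root := (hM.v_fix _).2 rfl

theorem v_injective : Function.Injective M.v :=
  Function.LeftInverse.injective (g := fun x => M.v (M.v x)) hM.v_cube

theorem e_eq_iff {x y : M.carrier} : M.e x = y ↔ x = M.e y :=
  ⟨fun h => h ▸ (hM.e_sq x).symm, fun h => h ▸ hM.e_sq y⟩

theorem forall_of_closed {P : M.carrier → Prop} {x₀ : M.carrier} (h₀ : P x₀)
    (hv : ∀ x, P x → P (M.v x)) (he : ∀ x, P x → P (M.e x)) (x : M.carrier) : P x := by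
  have hP : Equivalence fun a b => P a ↔ P b := ⟨fun _ => .rfl, Iff.symm, Iff.trans⟩
  refine (hP.eqvGen_iff.1 (Relation.EqvGen.mono ?_ _ _ (hM.trans x₀ x))).1 h₀
  rintro a _ (rfl | rfl)
  · exact ⟨hv a, fun h => hM.v_cube a ▸ hv _ (hv _ h)⟩
  · exact ⟨he a, fun h => hM.e_sq a ▸ he _ h⟩

theorem e_root_ne_root (hcard : Nat.card M.carrier ≠ 1) : M.e M.root ≠ M.root := by
  intro h
  have hall : ∀ x, x = M.root :=
    hM.forall_of_closed rfl (by rintro _ rfl; exact hM.v_root) (by rintro _ rfl; exact h)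
  exact hcard (Nat.card_eq_one_iff_unique.2
    ⟨⟨fun x y => (hall x).trans (hall y).symm⟩, ⟨M.root⟩⟩)

theorem v_ne_root {x : M.carrier} (hx : x ≠ M.root) : M.v x ≠ M.root :=
  fun h => hx (hM.v_injective (h.trans hM.v_root.symm))

theorem v_ne_self {x : M.carrier} (hx : x ≠ M.root) : M.v x ≠ x :=
  fun h => hx ((hM.v_fix x).1 h)

theorem v_v_ne_self {x : M.carrier} (hx : x ≠ M.root) : M.v (M.v x) ≠ x :=
  fun h => hM.v_ne_self hx ((congrArg M.v h).symm.trans (hM.v_cube x))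

theorem v_mem_delSet {x : M.carrier} (hx : x ∈ delSet M) : M.v x ∈ delSet M := by
  rcases hx with rfl | rfl | rfl | rfl
  · exact .inl hM.v_root
  · exact .inr (.inr (.inl rfl))
  · exact .inr (.inr (.inr rfl))
  · exact .inr (.inl (hM.v_cube _))

theorem v_mem_delSet_iff {x : M.carrier} : M.v x ∈ delSet M ↔ x ∈ delSet M :=
  ⟨fun h => hM.v_cube x ▸ hM.v_mem_delSet (hM.v_mem_delSet h), hM.v_mem_delSet⟩

theorem e_mem_delSet {x : M.carrier} (hx : x ∈ delSet M) :
    M.e x ∈ delSet M ∨ M.e x = dartA M ∨ M.e x = dartB M := by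
  rcases hx with rfl | rfl | rfl | rfl
  · exact .inl (.inr (.inl rfl))
  · exact .inl (.inl (hM.e_sq _))
  · exact .inr (.inl rfl)
  · exact .inr (.inr rfl)

theorem e_dartA_mem_delSet : M.e (dartA M) ∈ delSet M := .inr (.inr (.inl (hM.e_sq _)))

theorem e_dartB_mem_delSet : M.e (dartB M) ∈ delSet M := .inr (.inr (.inr (hM.e_sq _)))

theorem eq_dartA_or_eq_dartB_of_e_mem_delSet {x : M.carrier} (hx : x ∉ delSet M)
    (hex : M.e x ∈ delSet M) :
    x = dartA M ∨ x = dartB M := by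
  rcases hM.e_mem_delSet hex with h | h | h <;> rw [hM.e_sq] at h
  exacts [(hx h).elim, .inl h, .inr h]

theorem eq_dartA_or_eq_dartB_of_mem_boundary (her : M.e M.root ≠ M.root) {x : M.carrier}
    (hx : x ∈ M.boundary) (hxd : x ∈ delSet M) : x = dartA M ∨ x = dartB M := by
  have hfix := (hM.e_fix x).2 hx
  rcases hxd with rfl | rfl | rfl | rfl
  · exact (her hfix).elim
  · exact (her ((hM.e_sq _).symm.trans hfix).symm).elim
  · exact .inl hfix.symm
  · exact .inr hfix.symm

theorem dartA_ne_dartB (her : M.e M.root ≠ M.root) : dartA M ≠ dartB M := fun h =>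
  hM.v_ne_self (hM.v_ne_root her) ((Function.LeftInverse.injective hM.e_sq h).symm)

theorem ncard_delSet (her : M.e M.root ≠ M.root) : (delSet M).ncard = 4 := by
  have h1 := hM.v_ne_root her
  have h10 := hM.v_ne_self her
  have h20 := hM.v_v_ne_self her
  have h21 := hM.v_ne_self h1
  rw [delSet, Set.ncard_insert_of_notMem, Set.ncard_insert_of_notMem, Set.ncard_pair h21.symm]
  · simp [h10.symm, h20.symm]
  · simp [her.symm, h1.symm, (hM.v_ne_root h1).symm]

end IsRTMapB

section DConn

variable {M : PreMap} {a x y : M.carrier}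

theorem DConn.eq_or_notMem (h : DConn M x y) :
    x = y ∨ x ∉ delSet M ∧ y ∉ delSet M := by
  have hR : Equivalence fun a b : M.carrier => a = b ∨ a ∉ delSet M ∧ b ∉ delSet M := by
    refine ⟨fun _ => .inl rfl, ?_, ?_⟩
    · rintro a b (rfl | ⟨ha, hb⟩)
      exacts [.inl rfl, .inr ⟨hb, ha⟩]
    · rintro a b c (rfl | ⟨ha, hb⟩) (rfl | ⟨hb', hc⟩)
      exacts [.inl rfl, .inr ⟨hb', hc⟩, .inr ⟨ha, hb⟩, .inr ⟨ha, hc⟩]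
  exact hR.eqvGen_iff.1 (Relation.EqvGen.mono (fun _ _ hab => Or.inr ⟨hab.1, hab.2.1⟩) _ _ h)

theorem inComp.of_dConn (hx : inComp M a x) (h : DConn M x y) :
    inComp M a y :=
  ⟨h.eq_or_notMem.elim (· ▸ hx.1) And.right, hx.2.trans _ _ _ h⟩

theorem inComp_self (ha : a ∉ delSet M) : inComp M a a :=
  ⟨ha, .refl _⟩

theorem not_inComp_of_mem_delSet (ha : a ∈ delSet M) :
    ¬ inComp M a x :=
  fun hx => hx.2.eq_or_notMem.elim (fun h => hx.1 (h ▸ ha)) fun h => h.1 ha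

theorem inComp_e (hx : inComp M a x) (hex : M.e x ∉ delSet M) :
    inComp M a (M.e x) :=
  hx.of_dConn (.rel _ _ ⟨hx.1, hex, .inr rfl⟩)

theorem inComp2_iff :
    inComp2 M x ↔ inComp M (dartA M) x ∨ inComp M (dartB M) x := and_or_left

theorem inComp2.of_dConn (hx : inComp2 M x) (h : DConn M x y) :
    inComp2 M y :=
  inComp2_iff.2 ((inComp2_iff.1 hx).imp (·.of_dConn h) (·.of_dConn h))

end DConn

namespace IsRTMapB

variable {M : PreMap} (hM : IsRTMapB M)
include hM

theorem inComp_v {a x : M.carrier} (hx : inComp M a x) : inComp M a (M.v x) :=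
  hx.of_dConn (.rel _ _ ⟨hx.1, fun h => hx.1 (hM.v_mem_delSet_iff.1 h), .inl rfl⟩)

theorem inComp2_v {x : M.carrier} (hx : inComp2 M x) : inComp2 M (M.v x) :=
  hx.of_dConn (.rel _ _ ⟨hx.1, fun h => hx.1 (hM.v_mem_delSet_iff.1 h), .inl rfl⟩)

theorem inComp2_of_notMem {x : M.carrier} (hx : x ∉ delSet M) : inComp2 M x := by
  have hvac : ∀ a, a ∈ delSet M ∨ inComp M a a := fun a => (em _).imp_right inComp_self
  refine inComp2_iff.2 ((hM.forall_of_closed (x₀ := M.root)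
    (P := fun x => x ∈ delSet M ∨ inComp M (dartA M) x ∨ inComp M (dartB M) x)
    (.inl root_mem_delSet) ?_ ?_ x).resolve_left hx)
  · rintro y (h | h | h)
    exacts [.inl (hM.v_mem_delSet h), .inr (.inl (hM.inComp_v h)), .inr (.inr (hM.inComp_v h))]
  · rintro y (h | h | h)
    · rcases hM.e_mem_delSet h with h' | h' | h'
      · exact .inl h'
      · exact h' ▸ (hvac _).imp_right .inl
      · exact h' ▸ (hvac _).imp_right .inr
    · exact (em _).imp_right fun hey => .inl (inComp_e h hey)
    · exact (em _).imp_right fun hey => .inr (inComp_e h hey)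

theorem setOf_inComp2 : {x | inComp2 M x} = (delSet M)ᶜ :=
  Set.ext fun _ => ⟨And.left, hM.inComp2_of_notMem⟩

end IsRTMapB

section compMap

variable {M : PreMap} {a : M.carrier}

theorem compMap_v_some (hM : IsRTMapB M) (x : {x // inComp M a x}) :
    (compMap M a).v (some x) = some ⟨M.v x, hM.inComp_v x.2⟩ := dif_pos _

theorem compMap_v_some_eq_self_iff {x : {x // inComp M a x}} :
    (compMap M a).v (some x) = some x ↔ M.v x = x :=
  dite_some_subtype_eq_some_iff (S := inComp M a)

theorem compMap_e_none (ha : inComp M a a) : (compMap M a).e none = some ⟨a, ha⟩ := dif_pos ha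

theorem compMap_e_some {x : {x // inComp M a x}} (h : inComp M a (M.e x)) :
    (compMap M a).e (some x) = some ⟨M.e x, h⟩ := dif_pos h

theorem compMap_e_some_of_not {x : {x // inComp M a x}} (h : ¬ inComp M a (M.e x)) :
    (compMap M a).e (some x) = none := dif_neg h

theorem compMap_e_some_eq_self_iff {x : {x // inComp M a x}} :
    (compMap M a).e (some x) = some x ↔ M.e x = x :=
  dite_some_subtype_eq_some_iff (S := inComp M a)

theorem compMap_boundary (ha : a ∉ delSet M) :
    (compMap M a).boundary = M.boundary.optRestrict (inComp M a) := if_neg ha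

theorem none_notMem_compMap_boundary (ha : a ∉ delSet M) :
    (none : (compMap M a).carrier) ∉ (compMap M a).boundary := by
  rw [compMap_boundary ha]
  exact List.none_notMem_optRestrict _

theorem some_mem_compMap_boundary (ha : a ∉ delSet M) {x : {x // inComp M a x}} :
    (some x : (compMap M a).carrier) ∈ (compMap M a).boundary ↔ x.1 ∈ M.boundary := by
  rw [compMap_boundary ha]
  exact List.some_mem_optRestrict _

theorem isRTMapB_compMap_of_mem (ha : a ∈ delSet M) : IsRTMapB (compMap M a) := by
  refine isRTMapB_of_forall_eq_root ?_ (if_pos ha)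
  rintro (_ | x)
  exacts [rfl, (not_inComp_of_mem_delSet ha x.2).elim]

theorem IsRTMapB.compMap_eqvGen (hM : IsRTMapB M) (ha : a ∉ delSet M)
    (d d' : (compMap M a).carrier) :
    Relation.EqvGen (fun p q => (compMap M a).v p = q ∨ (compMap M a).e p = q) d d' := by
  suffices h : ∀ d, Relation.EqvGen _ none d from .trans _ _ _ (.symm _ _ (h d)) (h d')
  rintro (_ | ⟨x, hx⟩)
  · exact .refl _
  refine .trans _ _ _ (.rel _ _ (.inr (compMap_e_none (inComp_self ha)))) ?_
  refine Relation.EqvGen.subtype_map (fun h hp => hp.of_dConn h) some ?_ hx.2 (inComp_self ha) hx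
  rintro x y ⟨-, hy, h | h⟩
  · exact .inl ((compMap_v_some hM x).trans (congrArg some (Subtype.ext h)))
  · exact .inr ((compMap_e_some (h ▸ y.2)).trans (congrArg some (Subtype.ext h)))

theorem IsRTMapB.isRTMapB_compMap (hM : IsRTMapB M) (ha : a ∉ delSet M)
    (hea : M.e a ∈ delSet M) (hsep : ∀ x, inComp M a x → M.e x ∈ delSet M → x = a) :
    IsRTMapB (compMap M a) where
  v_cube := by
    rintro (_ | x)
    · rfl
    · simp only [compMap_v_some hM]
      exact congrArg some (Subtype.ext (hM.v_cube x))
  e_sq := by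
    have hnea : ¬ inComp M a (M.e a) := fun h => h.1 hea
    rintro (_ | ⟨x, hx⟩)
    · rw [compMap_e_none (inComp_self ha), compMap_e_some_of_not hnea]
    · by_cases hxa : x = a
      · subst hxa
        rw [compMap_e_some_of_not hnea, compMap_e_none]
      · have hex := inComp_e hx fun h => hxa (hsep x hx h)
        rw [compMap_e_some hex, compMap_e_some (by rwa [hM.e_sq])]
        exact congrArg some (Subtype.ext (hM.e_sq x))
  trans := hM.compMap_eqvGen ha
  v_fix := by
    rintro (_ | ⟨x, hx⟩)
    · exact iff_of_true rfl rfl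
    · refine iff_of_false (fun h => hx.1 ?_) (Option.some_ne_none _)
      exact (hM.v_fix x).1 (compMap_v_some_eq_self_iff.1 h) ▸ root_mem_delSet
  e_fix := by
    rintro (_ | x)
    · rw [compMap_e_none (inComp_self ha)]
      exact iff_of_false (Option.some_ne_none _) (none_notMem_compMap_boundary ha)
    · rw [compMap_e_some_eq_self_iff]
      exact (hM.e_fix x).trans (some_mem_compMap_boundary ha).symm
  nodup := by
    rw [compMap_boundary ha]
    exact hM.nodup.optRestrict _

theorem card_compMap [Finite M.carrier] (a : M.carrier) :
    Nat.card (compMap M a).carrier = {x | inComp M a x}.ncard + 1 := by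
  rw [← Nat.card_coe_set_eq]
  exact Finite.card_option

end compMap

section connMap

variable {M : PreMap}

theorem connMap_v_some (hM : IsRTMapB M) (x : {x // inComp2 M x}) :
    (connMap M).v (some x) = some ⟨M.v x, hM.inComp2_v x.2⟩ := dif_pos _

theorem connMap_v_some_eq_self_iff {x : {x // inComp2 M x}} :
    (connMap M).v (some x) = some x ↔ M.v x = x :=
  dite_some_subtype_eq_some_iff (S := inComp2 M)

theorem connMap_e_none (h : inComp2 M (dartA M)) : (connMap M).e none = some ⟨dartA M, h⟩ :=
  dif_pos h

theorem connMap_e_dartB {x : {x // inComp2 M x}} (hx : x.1 = dartB M) :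
    (connMap M).e (some x) = some x := if_pos hx

theorem connMap_e_some {x : {x // inComp2 M x}} (hx : x.1 ≠ dartB M) (h : inComp2 M (M.e x)) :
    (connMap M).e (some x) = some ⟨M.e x, h⟩ := (if_neg hx).trans (dif_pos h)

theorem connMap_e_some_of_not {x : {x // inComp2 M x}} (hx : x.1 ≠ dartB M)
    (h : ¬ inComp2 M (M.e x)) : (connMap M).e (some x) = none := (if_neg hx).trans (dif_neg h)

theorem connMap_e_some_eq_self_iff {x : {x // inComp2 M x}} (hx : x.1 ≠ dartB M) :
    (connMap M).e (some x) = some x ↔ M.e x = x := by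
  show (if x.1 = dartB M then some x else _) = some x ↔ _
  rw [if_neg hx]
  exact dite_some_subtype_eq_some_iff

theorem mem_connMap_boundary (hB : inComp2 M (dartB M)) {d : Option {x // inComp2 M x}} :
    (d : (connMap M).carrier) ∈ (connMap M).boundary ↔
      d ∈ M.boundary.optRestrict (inComp2 M) ∨ d = some ⟨dartB M, hB⟩ := by
  show d ∈ (M.boundary.optRestrict (inComp2 M) ++
    [if h : inComp2 M (dartB M) then some ⟨dartB M, h⟩ else none] : List (Option _)) ↔ _
  rw [dif_pos hB, List.mem_append, List.mem_singleton]

theorem none_notMem_connMap_boundary (hB : inComp2 M (dartB M)) :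
    (none : (connMap M).carrier) ∉ (connMap M).boundary := by
  rw [mem_connMap_boundary hB, not_or]
  exact ⟨List.none_notMem_optRestrict _, (Option.some_ne_none _).symm⟩

theorem some_mem_connMap_boundary (hB : inComp2 M (dartB M)) {x : {x // inComp2 M x}} :
    (some x : (connMap M).carrier) ∈ (connMap M).boundary ↔
      x.1 ∈ M.boundary ∨ x.1 = dartB M := by
  rw [mem_connMap_boundary hB, List.some_mem_optRestrict, Option.some_inj, Subtype.ext_iff]

theorem isRTMapB_connMap_of_mem (hA : dartA M ∈ delSet M) (hB : dartB M ∈ delSet M) :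
    IsRTMapB (connMap M) := by
  have hempty : ∀ x, ¬ inComp2 M x := fun x hx =>
    (inComp2_iff.1 hx).elim (not_inComp_of_mem_delSet hA) (not_inComp_of_mem_delSet hB)
  refine isRTMapB_of_forall_eq_root ?_ ?_
  · rintro (_ | x)
    exacts [rfl, (hempty _ x.2).elim]
  · show (M.boundary.optRestrict (inComp2 M) ++
      [if h : inComp2 M (dartB M) then some ⟨dartB M, h⟩ else none] : List (Option _)) = [none]
    rw [List.optRestrict_eq_nil _ hempty, dif_neg (hempty _)]
    rfl

theorem IsRTMapB.connMap_eqvGen (hM : IsRTMapB M) (hA : dartA M ∉ delSet M)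
    (hAB : DConn M (dartA M) (dartB M)) (d d' : (connMap M).carrier) :
    Relation.EqvGen (fun p q => (connMap M).v p = q ∨ (connMap M).e p = q) d d' := by
  have hiA : inComp2 M (dartA M) := inComp2_iff.2 (.inl (inComp_self hA))
  suffices h : ∀ d, Relation.EqvGen _ none d from .trans _ _ _ (.symm _ _ (h d)) (h d')
  rintro (_ | ⟨x, hx⟩)
  · exact .refl _
  refine .trans _ _ _ (.rel _ _ (.inr (connMap_e_none hiA))) ?_
  have hAx : DConn M (dartA M) x := hx.2.elim id (hAB.trans _ _ _)
  refine Relation.EqvGen.subtype_map (fun h hp => hp.of_dConn h) some ?_ hAx hiA hx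
  rintro x y ⟨-, hy, h | h⟩
  · exact .inl ((connMap_v_some hM x).trans (congrArg some (Subtype.ext h)))
  · have hxB : x.1 ≠ dartB M := fun hxB => hy (h ▸ hxB ▸ hM.e_dartB_mem_delSet)
    exact .inr ((connMap_e_some hxB (h ▸ y.2)).trans (congrArg some (Subtype.ext h)))

theorem IsRTMapB.connMap_e_e (hM : IsRTMapB M) (her : M.e M.root ≠ M.root)
    (hA : dartA M ∉ delSet M) (d : (connMap M).carrier) :
    (connMap M).e ((connMap M).e d) = d := by
  have hiA : inComp2 M (dartA M) := inComp2_iff.2 (.inl (inComp_self hA))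
  have hnA : ¬ inComp2 M (M.e (dartA M)) := fun h => h.1 hM.e_dartA_mem_delSet
  rcases d with _ | ⟨x, hx⟩
  · rw [connMap_e_none hiA, connMap_e_some_of_not (hM.dartA_ne_dartB her) hnA]
  by_cases hxB : x = dartB M
  · rw [connMap_e_dartB hxB, connMap_e_dartB hxB]
  by_cases hxA : x = dartA M
  · subst hxA
    rw [connMap_e_some_of_not hxB hnA, connMap_e_none]
  have hex : M.e x ∉ delSet M := fun h =>
    (hM.eq_dartA_or_eq_dartB_of_e_mem_delSet hx.1 h).elim hxA hxB
  have hexB : M.e x ≠ dartB M := fun h => hx.1 (hM.e_eq_iff.1 h ▸ hM.e_dartB_mem_delSet)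
  have hiex : inComp2 M (M.e x) := hx.of_dConn (.rel _ _ ⟨hx.1, hex, .inr rfl⟩)
  rw [connMap_e_some hxB hiex, connMap_e_some hexB (by rwa [hM.e_sq])]
  exact congrArg some (Subtype.ext (hM.e_sq x))

theorem IsRTMapB.isRTMapB_connMap_of_notMem (hM : IsRTMapB M) (her : M.e M.root ≠ M.root)
    (hA : dartA M ∉ delSet M) (hB : dartB M ∉ delSet M) (hAB : DConn M (dartA M) (dartB M)) :
    IsRTMapB (connMap M) where
  v_cube := by
    rintro (_ | x)
    · rfl
    · simp only [connMap_v_some hM]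
      exact congrArg some (Subtype.ext (hM.v_cube x))
  e_sq := hM.connMap_e_e her hA
  trans := hM.connMap_eqvGen hA hAB
  v_fix := by
    rintro (_ | ⟨x, hx⟩)
    · exact iff_of_true rfl rfl
    · refine iff_of_false (fun h => hx.1 ?_) (Option.some_ne_none _)
      exact (hM.v_fix x).1 (connMap_v_some_eq_self_iff.1 h) ▸ root_mem_delSet
  e_fix := by
    have hiB : inComp2 M (dartB M) := inComp2_iff.2 (.inr (inComp_self hB))
    rintro (_ | x)
    · rw [connMap_e_none (inComp2_iff.2 (.inl (inComp_self hA)))]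
      exact iff_of_false (Option.some_ne_none _) (none_notMem_connMap_boundary hiB)
    · by_cases hxB : x.1 = dartB M
      · exact iff_of_true (connMap_e_dartB hxB) ((some_mem_connMap_boundary hiB).2 (.inr hxB))
      · rw [connMap_e_some_eq_self_iff hxB]
        exact (hM.e_fix x).trans ((some_mem_connMap_boundary hiB).trans (or_iff_left hxB)).symm
  nodup := by
    show (M.boundary.optRestrict (inComp2 M) ++
      [if h : inComp2 M (dartB M) then some ⟨dartB M, h⟩ else none] : List (Option _)).Nodup
    rw [dif_pos (inComp2_iff.2 (.inr (inComp_self hB))), ← List.concat_eq_append]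
    refine (hM.nodup.optRestrict _).concat fun h => hB ?_
    have hfix : M.e (dartB M) = dartB M := (hM.e_fix _).2 ((List.some_mem_optRestrict _).1 h)
    exact hfix ▸ hM.e_dartB_mem_delSet

theorem card_connMap [Finite M.carrier] :
    Nat.card (connMap M).carrier = {x | inComp2 M x}.ncard + 1 := by
  rw [← Nat.card_coe_set_eq]
  exact Finite.card_option

end connMap

namespace IsRTMapB

variable {M : PreMap} (hM : IsRTMapB M)
include hM

theorem isRTMapB_compMap_of_not_dConn (hAB : ¬ DConn M (dartA M) (dartB M)) {a : M.carrier}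
    (ha : a = dartA M ∨ a = dartB M) : IsRTMapB (compMap M a) := by
  by_cases had : a ∈ delSet M
  · exact isRTMapB_compMap_of_mem had
  refine hM.isRTMapB_compMap had (ha.elim (· ▸ hM.e_dartA_mem_delSet)
    (· ▸ hM.e_dartB_mem_delSet)) fun x hx hex => ?_
  rcases ha with rfl | rfl <;>
    rcases hM.eq_dartA_or_eq_dartB_of_e_mem_delSet hx.1 hex with rfl | rfl
  exacts [rfl, (hAB hx.2).elim, (hAB (.symm _ _ hx.2)).elim, rfl]

theorem isRTMapB_connMap (her : M.e M.root ≠ M.root) (hc : ConnCase M) :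
    IsRTMapB (connMap M) := by
  by_cases hA : dartA M ∈ delSet M
  -- then `w` carries a loop and nothing survives
  · refine isRTMapB_connMap_of_mem hA ?_
    rcases hc with hloop | hAB
    · rw [dartB, ← hloop]
      exact hM.e_dartA_mem_delSet
    · exact hAB.eq_or_notMem.elim (· ▸ hA) fun h => (h.1 hA).elim
  · have hAB : DConn M (dartA M) (dartB M) :=
      hc.resolve_left fun h => hA (h ▸ .inr (.inr (.inr rfl)))
    exact hM.isRTMapB_connMap_of_notMem her hA
      (hAB.eq_or_notMem.elim (· ▸ hA) And.right) hAB

theorem notMem_delSet_of_mem_boundary (her : M.e M.root ≠ M.root) (hc : ConnCase M)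
    {x : M.carrier} (hx : x ∈ M.boundary) : x ∉ delSet M := by
  intro hxd
  have hfix := (hM.e_fix x).2 hx
  have h21 := hM.v_ne_self (hM.v_ne_root her)
  rcases hM.eq_dartA_or_eq_dartB_of_mem_boundary her hx hxd with rfl | rfl <;>
    rcases hc with hloop | hAB
  · exact h21 ((hM.e_sq _).symm.trans (hfix.trans hloop)).symm
  · exact hAB.eq_or_notMem.elim (hM.dartA_ne_dartB her) fun h => h.1 hxd
  · exact h21 ((hM.e_eq_iff.1 hloop).trans ((hM.e_sq _).symm.trans hfix).symm).symm
  · exact hAB.eq_or_notMem.elim (hM.dartA_ne_dartB her) fun h => h.2 hxd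

theorem mem_boundary_of_mem_delSet (her : M.e M.root ≠ M.root) (hc : ¬ ConnCase M)
    {a : M.carrier} (ha : a = dartA M ∨ a = dartB M) (had : a ∈ delSet M) :
    a ∈ M.boundary := by
  have h1 := hM.v_ne_root her
  have h10 := hM.v_ne_self her
  have h20 := hM.v_v_ne_self her
  have h2 := hM.v_ne_root h1
  refine (hM.e_fix a).1 ?_
  rcases ha with rfl | rfl <;> rcases had with h | h | h | h
  · exact (h10 (hM.e_eq_iff.1 h)).elim
  · exact (h1 ((hM.e_eq_iff.1 h).trans (hM.e_sq _))).elim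
  · exact (hM.e_sq _).trans h.symm
  · exact (hc (.inl h)).elim
  · exact (h20 (hM.e_eq_iff.1 h)).elim
  · exact (h2 ((hM.e_eq_iff.1 h).trans (hM.e_sq _))).elim
  · exact (hc (.inl (hM.e_eq_iff.1 h).symm)).elim
  · exact (hM.e_sq _).trans h.symm

/-- The hypothesis covers the one-dart component, whose single boundary dart stands for the
deleted boundary dart `a`. -/
theorem length_compMap_boundary {a : M.carrier} (ha : a ∈ delSet M → a ∈ M.boundary) :
    (compMap M a).boundary.length = M.boundary.countP fun x => decide (DConn M a x) := by
  by_cases had : a ∈ delSet M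
  · rw [show (compMap M a).boundary = [none] from if_pos had]
    show 1 = _
    rw [← List.count_eq_one_of_mem hM.nodup (ha had), List.count]
    refine List.countP_congr fun x _ => ?_
    simp only [beq_iff_eq, decide_eq_true_eq]
    exact ⟨by rintro rfl; exact .refl _,
      fun h => h.eq_or_notMem.elim Eq.symm fun h' => (h'.1 had).elim⟩
  · rw [compMap_boundary had]
    refine (List.length_optRestrict _).trans ?_
    refine List.countP_congr fun x _ => ?_
    simp only [decide_eq_true_eq]
    exact ⟨And.right, (inComp_self had).of_dConn⟩

theorem length_compMap_boundary_add (her : M.e M.root ≠ M.root) (hc : ¬ ConnCase M) :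
    (compMap M (dartA M)).boundary.length + (compMap M (dartB M)).boundary.length =
      M.boundary.length := by
  have hAB : ¬ DConn M (dartA M) (dartB M) := fun h => hc (.inr h)
  rw [hM.length_compMap_boundary (hM.mem_boundary_of_mem_delSet her hc (.inl rfl)),
    hM.length_compMap_boundary (hM.mem_boundary_of_mem_delSet her hc (.inr rfl)),
    List.length_eq_countP_add_countP (fun x => decide (DConn M (dartA M) x))]
  congr 1
  refine List.countP_congr fun x hx => ?_
  have hcover : DConn M (dartA M) x ∨ DConn M (dartB M) x := by
    by_cases hxd : x ∈ delSet M
    · rcases hM.eq_dartA_or_eq_dartB_of_mem_boundary her hx hxd with rfl | rfl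
      exacts [.inl (.refl _), .inr (.refl _)]
    · exact (hM.inComp2_of_notMem hxd).2
  have hdisj : ¬ (DConn M (dartA M) x ∧ DConn M (dartB M) x) := fun ⟨hA, hB⟩ =>
    hAB (hA.trans _ _ _ (.symm _ _ hB))
  simp only [decide_eq_true_eq, decide_not, Bool.not_eq_eq_eq_not, Bool.not_true,
    decide_eq_false_iff_not]
  tauto

theorem length_connMap_boundary (her : M.e M.root ≠ M.root) (hc : ConnCase M) :
    (connMap M).boundary.length = M.boundary.length + 1 := by
  show (M.boundary.optRestrict (inComp2 M) ++
    [if h : inComp2 M (dartB M) then some ⟨dartB M, h⟩ else none] : List (Option _)).length = _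
  rw [List.length_append, List.length_optRestrict, List.length_singleton,
    List.countP_eq_length.2 fun x hx => ?_]
  exact decide_eq_true (hM.inComp2_of_notMem (hM.notMem_delSet_of_mem_boundary her hc hx))

variable [Finite M.carrier]

theorem three_dvd_ncard_inComp (a : M.carrier) : 3 ∣ {x | inComp M a x}.ncard := by
  rw [← Nat.card_coe_set_eq]
  refine three_dvd_card_of_cube_eq_id (fun x => ⟨M.v x.1, hM.inComp_v x.2⟩)
    (fun x => Subtype.ext (hM.v_cube x.1)) fun x h => x.2.1 ?_
  exact (hM.v_fix x.1).1 (congrArg Subtype.val h) ▸ root_mem_delSet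

theorem ncard_compl_delSet_add_four (her : M.e M.root ≠ M.root) :
    (delSet M)ᶜ.ncard + 4 = Nat.card M.carrier := by
  rw [← hM.ncard_delSet her, add_comm, Set.ncard_add_ncard_compl]

theorem ncard_inComp_add_ncard_inComp (hAB : ¬ DConn M (dartA M) (dartB M)) :
    {x | inComp M (dartA M) x}.ncard + {x | inComp M (dartB M) x}.ncard = (delSet M)ᶜ.ncard := by
  rw [← Set.ncard_union_eq]
  · congr 1
    ext x
    exact ⟨fun h => h.elim And.left And.left, fun h => inComp2_iff.1 (hM.inComp2_of_notMem h)⟩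
  · exact Set.disjoint_left.2 fun x hA hB => hAB (hA.2.trans _ _ _ (.symm _ _ hB.2))

end IsRTMapB

/-- Root-vertex decomposition: for a rooted trivalent map with boundary of
degree `k` and `n ≥ 1` trivalent vertices, exactly one of the following
holds.  (a) Deleting the trivalent vertex `w` incident to the root (together
with the root) disconnects the map, and the two resulting components, each
re-rooted at the dart vacated by `w`, are rooted trivalent maps with
boundary of degrees `k₁ + k₂ = k` and with `n₁ + n₂ = n - 1` trivalent
vertices; or (b) deleting `w` leaves the map connected, and the result,
re-rooted at one vacated dart with the other vacated dart appended to the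
boundary, is a rooted trivalent map with boundary of degree `k + 1` and
`n - 1` trivalent vertices. -/
theorem root_vertex_decomposition (M : PreMap) (hM : IsRTMapB M) (n k : ℕ)
    (hn : 1 ≤ n) (hcard : Nat.card M.carrier = 3 * n + 1)
    (hk : M.boundary.length = k) :
    (¬ ConnCase M ∧
      IsRTMapB (compMap M (dartA M)) ∧ IsRTMapB (compMap M (dartB M)) ∧
      (∃ n₁ n₂ : ℕ, n₁ + n₂ = n - 1 ∧
        Nat.card (compMap M (dartA M)).carrier = 3 * n₁ + 1 ∧
        Nat.card (compMap M (dartB M)).carrier = 3 * n₂ + 1) ∧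
      (∃ k₁ k₂ : ℕ, k₁ + k₂ = k ∧
        (compMap M (dartA M)).boundary.length = k₁ ∧
        (compMap M (dartB M)).boundary.length = k₂)) ∨
    (ConnCase M ∧
      IsRTMapB (connMap M) ∧
      Nat.card (connMap M).carrier = 3 * (n - 1) + 1 ∧
      (connMap M).boundary.length = k + 1) := by
  have : Finite M.carrier := Nat.finite_of_card_ne_zero (by omega)
  have her : M.e M.root ≠ M.root := hM.e_root_ne_root (by omega)
  have hrest := hM.ncard_compl_delSet_add_four her
  by_cases hc : ConnCase M
  · refine .inr ⟨hc, hM.isRTMapB_connMap her hc, ?_, ?_⟩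
    · rw [card_connMap, hM.setOf_inComp2]
      omega
    · rw [hM.length_connMap_boundary her hc, hk]
  · have hAB : ¬ DConn M (dartA M) (dartB M) := fun h => hc (.inr h)
    obtain ⟨n₁, h₁⟩ := hM.three_dvd_ncard_inComp (dartA M)
    obtain ⟨n₂, h₂⟩ := hM.three_dvd_ncard_inComp (dartB M)
    have hsum := hM.ncard_inComp_add_ncard_inComp hAB
    refine .inl ⟨hc, hM.isRTMapB_compMap_of_not_dConn hAB (.inl rfl),
      hM.isRTMapB_compMap_of_not_dConn hAB (.inr rfl),
      ⟨n₁, n₂, by omega, by rw [card_compMap, h₁], by rw [card_compMap, h₂]⟩,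
      ⟨_, _, hk ▸ hM.length_compMap_boundary_add her hc, rfl, rfl⟩⟩
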